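/- Assume the Markov chain with transition kernel P is m-recurrent for some nonzero σ-finite measure m. Then for every x ∈ S, the set T(x) = { y ∈ S : p^n(x,y) = 0 for all n ≥ 1 } satisfies m(T(x)) = 0. -/

import Mathlib

open MeasureTheory ProbabilityTheory
open scoped ENNReal NNReal

noncomputable section

/-- The hitting time `T_A = inf {n ≥ 1 : ω n ∈ A}`, with value `⊤ : ℕ∞` if no such `n` exists. -/
def hitTime {S : Type*} (A : Set S) (ω : ℕ → S) : ℕ∞ :=
  sInf ((fun k : ℕ => (k : ℕ∞)) '' {k : ℕ | 1 ≤ k ∧ ω k ∈ A})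

/-- `IsMarkovPath K μ₀ L` says that `L` is the law on path space `ℕ → E` of the
time-homogeneous Markov chain with transition kernel `K` and initial distribution `μ₀`
(the measure produced by the Ionescu–Tulcea construction), characterized through its
finite-dimensional distributions. -/
def IsMarkovPath {E : Type*} [MeasurableSpace E] (K : Kernel E E) (μ₀ : Measure E)
    (L : Measure (ℕ → E)) : Prop :=
  IsProbabilityMeasure L ∧
    L.map (fun ω => ω 0) = μ₀ ∧
    ∀ n : ℕ,
      L.map (fun ω => fun i : Fin (n + 2) => ω (i : ℕ)) =
        (L.map (fun ω => fun i : Fin (n + 1) => ω (i : ℕ))).bind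
          (fun v => (K (v (Fin.last n))).map (Fin.snoc v))

/-- The `n`-step transition kernel `K^n`. -/
def kiter {E : Type*} [MeasurableSpace E] (K : Kernel E E) : ℕ → Kernel E E
  | 0 => Kernel.id
  | n + 1 => (kiter K n) ∘ₖ K

instance kiter.isMarkovKernel {E : Type*} [MeasurableSpace E] (K : Kernel E E)
    [IsMarkovKernel K] (n : ℕ) : IsMarkovKernel (kiter K n) := by
  induction n with
  | zero => rw [kiter]; infer_instance
  | succ n ih => rw [kiter]; infer_instance

/-! Recurrence makes `m` absolutely continuous with respect to the occupation measure
`∑_{n ≥ 1} P^n(x, ·)`: a set charged by no `P^n(x, ·)` is almost surely never visited.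
On the set `Z` where every density `dP^n(x, ·)/dm` vanishes, each `P^n(x, ·)` coincides with its
singular part, so the occupation measure restricted to `Z` is singular to `m`. Hence `m`
restricted to `Z` is both absolutely continuous and singular with respect to itself, i.e. zero. -/

namespace MeasureTheory.Measure

variable {α β γ : Type*} [MeasurableSpace α] [MeasurableSpace β] [MeasurableSpace γ]

lemma map_bind {μ : Measure α} {f : α → Measure β} (hf : AEMeasurable f μ) {g : β → γ}
    (hg : Measurable g) : (μ.bind f).map g = μ.bind fun a => (f a).map g := by
  ext s hs
  rw [map_apply hg hs, bind_apply (hg hs) hf,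
    bind_apply hs (f := fun a => (f a).map g) ((measurable_map g hg).comp_aemeasurable hf)]
  simp_rw [map_apply hg hs]

lemma bind_map {μ : Measure α} {g : α → β} (hg : Measurable g) {f : β → Measure γ}
    (hf : Measurable f) : (μ.map g).bind f = μ.bind fun a => f (g a) := by
  ext s hs
  rw [bind_apply hs hf.aemeasurable,
    bind_apply hs (f := fun a => f (g a)) (hf.comp hg).aemeasurable,
    lintegral_map (f := fun b => f b s) ((measurable_coe hs).comp hf) hg]

lemma mutuallySingular_restrict_rnDeriv_eq_zero (μ ν : Measure α)
    [μ.HaveLebesgueDecomposition ν] :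
    μ.restrict {a | μ.rnDeriv ν a = 0} ⟂ₘ ν := by
  set Z := {a | μ.rnDeriv ν a = 0}
  have hZ : MeasurableSet Z := measurable_rnDeriv μ ν (measurableSet_singleton 0)
  have hdensity : (ν.withDensity (μ.rnDeriv ν)).restrict Z = 0 := by
    rw [restrict_withDensity hZ, ← withDensity_indicator hZ,
      show Z.indicator (μ.rnDeriv ν) = 0 from funext fun a => Set.indicator_apply_eq_zero.2 id,
      withDensity_zero]
  conv_lhs => rw [haveLebesgueDecomposition_add μ ν]
  rw [restrict_add, hdensity, add_zero]
  exact (mutuallySingular_singularPart μ ν).restrict Z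

lemma mutuallySingular_sum_restrict_rnDeriv_eq_zero {ι : Type*} [Countable ι]
    (μ : ι → Measure α) (ν : Measure α) [∀ i, (μ i).HaveLebesgueDecomposition ν] :
    (sum μ).restrict {a | ∀ i, (μ i).rnDeriv ν a = 0} ⟂ₘ ν := by
  have hZ : MeasurableSet {a | ∀ i, (μ i).rnDeriv ν a = 0} := by
    simp only [Set.ofPred_forall]
    exact .iInter fun i => measurable_rnDeriv (μ i) ν (measurableSet_singleton 0)
  rw [restrict_sum _ hZ, MutuallySingular.sum_left]
  refine fun i => (mutuallySingular_restrict_rnDeriv_eq_zero (μ i) ν).mono_ac ?_ .rfl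
  exact absolutelyContinuous_of_le
    (restrict_mono (fun a (ha : ∀ j, (μ j).rnDeriv ν a = 0) => ha i) le_rfl)

end MeasureTheory.Measure

lemma setOf_hitTime_lt_top {S : Type*} (A : Set S) :
    {ω : ℕ → S | hitTime A ω < ⊤} = ⋃ k : ℕ, (fun ω => ω (k + 1)) ⁻¹' A := by
  ext ω
  simp only [hitTime, lt_top_iff_ne_top, ne_eq, sInf_eq_top, Set.mem_ofPred_eq,
    Set.forall_mem_image, ENat.natCast_ne_top, imp_false, not_forall, not_not, Set.mem_iUnion,
    Set.mem_preimage]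
  exact ⟨fun ⟨k, hk, hA⟩ => ⟨k - 1, by rwa [Nat.sub_add_cancel hk]⟩,
    fun ⟨i, hi⟩ => ⟨i + 1, i.succ_pos, hi⟩⟩

section MarkovChain

variable {E : Type*} [MeasurableSpace E]

lemma measurable_uncurry_snoc (n : ℕ) :
    Measurable (fun q : (Fin n → E) × E => Fin.snoc q.1 q.2 : _ → Fin (n + 1) → E) := by
  refine measurable_pi_lambda _ fun i => Fin.lastCases ?_ (fun j => ?_) i
  · simpa only [Fin.snoc_last] using measurable_snd
  · simp only [Fin.snoc_castSucc]
    exact (measurable_pi_apply j).comp measurable_fst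

lemma measurable_snoc {n : ℕ} (v : Fin n → E) :
    Measurable (@Fin.snoc n (fun _ => E) v) :=
  (measurable_uncurry_snoc n).comp measurable_prodMk_left

lemma measurable_map_snoc (K : Kernel E E) [IsSFiniteKernel K] (n : ℕ) :
    Measurable fun v : Fin (n + 1) → E =>
      (K (v (Fin.last n))).map (@Fin.snoc (n + 1) (fun _ => E) v) := by
  have hlast : Measurable fun v : Fin (n + 1) → E => v (Fin.last n) := measurable_pi_apply _
  convert ((Kernel.id ×ₖ K.comap _ hlast).map
    fun q : (Fin (n + 1) → E) × E => (Fin.snoc q.1 q.2 : Fin (n + 2) → E)).measurable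
    using 1
  funext v
  rw [Kernel.map_apply _ (measurable_uncurry_snoc (n + 1)), Kernel.prod_apply, Kernel.id_apply,
    Kernel.comap_apply, Measure.dirac_prod, Measure.map_map (measurable_uncurry_snoc (n + 1))
    measurable_prodMk_left]
  rfl

lemma kiter_succ' (K : Kernel E E) [IsMarkovKernel K] (n : ℕ) :
    kiter K (n + 1) = K ∘ₖ kiter K n := by
  induction n with
  | zero => simp [kiter, Kernel.id_comp, Kernel.comp_id]
  | succ n ih => rw [kiter, ih, Kernel.comp_assoc, ← kiter, ih]

def occupationMeasure (K : Kernel E E) (x : E) : Measure E :=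
  Measure.sum fun n => kiter K (n + 1) x

variable {K : Kernel E E} [IsMarkovKernel K]

lemma IsMarkovPath.map_eval {x : E} {L : Measure (ℕ → E)}
    (hL : IsMarkovPath K (Measure.dirac x) L) (n : ℕ) :
    L.map (fun ω => ω n) = kiter K n x := by
  have hproj : ∀ k, Measurable fun ω : ℕ → E => fun i : Fin k => ω i :=
    fun k => measurable_pi_lambda _ fun i => measurable_pi_apply _
  induction n with
  | zero => rw [hL.2.1]; rfl
  | succ n ih =>
    calc L.map (fun ω => ω (n + 1))
        = (L.map fun ω => fun i : Fin (n + 2) => ω i).map fun v => v (Fin.last (n + 1)) := by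
          rw [Measure.map_map (measurable_pi_apply _) (hproj _)]; rfl
      _ = (L.map fun ω => fun i : Fin (n + 1) => ω i).bind fun v => K (v (Fin.last n)) := by
          rw [hL.2.2 n, Measure.map_bind (measurable_map_snoc K n).aemeasurable
            (measurable_pi_apply _)]
          congr 1
          funext v
          rw [Measure.map_map (measurable_pi_apply _) (measurable_snoc v),
            show (fun w : Fin (n + 2) → E => w (Fin.last (n + 1))) ∘ Fin.snoc v = id from
              funext fun y => Fin.snoc_last (α := fun _ => E) y v, Measure.map_id]
      _ = (L.map fun ω => ω n).bind K := by
          rw [Measure.bind_map (hproj _) (f := fun v => K (v (Fin.last n)))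
            (K.measurable.comp (measurable_pi_apply _)),
            Measure.bind_map (measurable_pi_apply _) K.measurable]
          rfl
      _ = kiter K (n + 1) x := by rw [ih, kiter_succ', Kernel.comp_apply]

lemma IsMarkovPath.measure_hitTime_lt_top_le {x : E} {L : Measure (ℕ → E)}
    (hL : IsMarkovPath K (Measure.dirac x) L) {A : Set E} (hA : MeasurableSet A) :
    L {ω | hitTime A ω < ⊤} ≤ occupationMeasure K x A := by
  rw [setOf_hitTime_lt_top, occupationMeasure, Measure.sum_apply _ hA]
  refine (measure_iUnion_le _).trans_eq (tsum_congr fun k => ?_)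
  rw [← Measure.map_apply (measurable_pi_apply _) hA, hL.map_eval]

lemma IsMarkovPath.absolutelyContinuous_occupationMeasure {x : E} {L : Measure (ℕ → E)}
    (hL : IsMarkovPath K (Measure.dirac x) L) {m : Measure E}
    (hrec : ∀ A, MeasurableSet A → 0 < m A → L {ω | hitTime A ω < ⊤} = 1) :
    m ≪ occupationMeasure K x := by
  refine .mk fun A hA hA0 => ?_
  by_contra hmA
  have := (hrec A hA (pos_iff_ne_zero.2 hmA)).symm.trans_le (hL.measure_hitTime_lt_top_le hA)
  simp [hA0] at this

end MarkovChain

theorem harris_null_set_of_vanishing_densities_general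
    {S : Type*} [MeasurableSpace S]
    (P : Kernel S S) [IsMarkovKernel P]
    (Pr : S → Measure (ℕ → S))
    (hPr : ∀ x : S, IsMarkovPath P (Measure.dirac x) (Pr x))
    (m : Measure S) [SigmaFinite m]
    (hrec : ∀ A : Set S, MeasurableSet A → 0 < m A →
      ∀ x : S, Pr x {ω | hitTime A ω < ⊤} = 1)
    (p : ℕ → S → S → ℝ≥0∞)
    (hp : ∀ n : ℕ, 1 ≤ n → ∀ x : S, (fun y => p n x y) =ᵐ[m] (kiter P n x).rnDeriv m) :
    ∀ x : S, m {y : S | ∀ n : ℕ, 1 ≤ n → p n x y = 0} = 0 := by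
  intro x
  set Z := {y | ∀ n, (kiter P (n + 1) x).rnDeriv m y = 0}
  have hZ : m Z = 0 := by
    have hac : m.restrict Z ≪ (occupationMeasure P x).restrict Z :=
      ((hPr x).absolutelyContinuous_occupationMeasure fun A hA hmA => hrec A hA hmA x).restrict Z
    have hsing := (Measure.mutuallySingular_sum_restrict_rnDeriv_eq_zero _ m).mono_ac hac
      (Measure.absolutelyContinuous_of_le (Measure.restrict_le_self (s := Z)))
    rwa [Measure.MutuallySingular.self_iff, Measure.restrict_eq_zero] at hsing
  refine measure_mono_null_ae ?_ hZ
  filter_upwards [ae_all_iff.2 fun n => hp (n + 1) n.succ_pos x] with y hy hyT n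
  rw [← hy n]
  exact hyT (n + 1) n.succ_pos

/-- If the chain is `m`-recurrent then for every `x` the set
`T (x) = {y : p^n (x,y) = 0 for all n ≥ 1}` is `m`-null, where `p n` is a jointly
measurable version of the density with respect to `m` of the absolutely continuous part of
the `n`-step transition probability. -/
theorem harris_null_set_of_vanishing_densities
    {S : Type*} [MeasurableSpace S] [MeasurableSpace.CountablyGenerated S]
    (P : Kernel S S) [IsMarkovKernel P]
    (Pr : S → Measure (ℕ → S))
    (hPr : ∀ x : S, IsMarkovPath P (Measure.dirac x) (Pr x))
    (m : Measure S) [SigmaFinite m] (hm : m ≠ 0)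
    (hrec : ∀ A : Set S, MeasurableSet A → 0 < m A →
      ∀ x : S, Pr x {ω | hitTime A ω < ⊤} = 1)
    (p : ℕ → S → S → ℝ≥0∞)
    (hp_meas : ∀ n : ℕ, Measurable (fun q : S × S => p n q.1 q.2))
    (hp : ∀ n : ℕ, 1 ≤ n → ∀ x : S, (fun y => p n x y) =ᵐ[m] (kiter P n x).rnDeriv m) :
    ∀ x : S, m {y : S | ∀ n : ℕ, 1 ≤ n → p n x y = 0} = 0 :=
  harris_null_set_of_vanishing_densities_general P Pr hPr m hrec p hp
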